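/- The generating function B_b(x) = Σ_n M_b(n) x^n of the sequence M_b(n) = Σ_{j=0}^n (C(n+j,j) - C(n+j,j-1))·b^{n-j} satisfies B_b(x)·(1 - b·x·C(x)) = C(x), where C(x) is the Catalan generating function satisfying C(x) = 1 + x·C(x)^2. -/

import Mathlib

/-!
Write `M n = ∑_{i+j=n} ballot n i * b^j` and `B = ∑ M n x^n`. Pascal's rule for the ballot
numbers, with `ballot n n = catalan n` and `ballot n (n+1) = 0`, gives the recursion
`(1 - b) M (n+1) + b² M n = catalan (n+1)`, that is `B (1 - b + b² x) = C - b`.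
On the other hand `C = 1 + x C²` gives `(C - b)(1 - b x C) = C (1 - b + b² x)`, and
`1 - b + b² x ≠ 0` can be cancelled over a domain. The equation `C = 1 + x C²` pins `C` down as
the Catalan series: the difference of two solutions is killed by the unit `1 - x (C + C')`.
-/

open Finset PowerSeries

def ballot : ℕ → ℕ → ℤ
  | _, 0 => 1
  | n, j + 1 => ((n + (j + 1)).choose (j + 1) : ℤ) - (n + (j + 1)).choose j

theorem cast_ballot {R : Type*} [Ring R] (n j : ℕ) :
    (ballot n j : R) =
      ((n + j).choose j : R) - if j = 0 then 0 else ((n + j).choose (j - 1) : R) := by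
  cases j <;> simp [ballot]

theorem ballot_zero_right (n : ℕ) : ballot n 0 = 1 := rfl

theorem ballot_succ_succ (n j : ℕ) :
    ballot (n + 1) (j + 1) = ballot n (j + 1) + ballot (n + 1) j := by
  cases j with
  | zero => simp [ballot]
  | succ k =>
    simp only [ballot, show n + 1 + (k + 1 + 1) = n + (k + 1 + 1) + 1 by omega,
      show n + 1 + (k + 1) = n + (k + 1 + 1) by omega, Nat.choose_succ_succ', Nat.cast_add]
    ring

theorem ballot_succ_self (n : ℕ) : ballot n (n + 1) = 0 := by
  rw [ballot, show n + (n + 1) = 2 * n + 1 by omega, Nat.choose_symm_half, sub_self]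

theorem ballot_self (n : ℕ) : ballot n n = catalan n := by
  cases n with
  | zero => simp [ballot]
  | succ m =>
    have hchoose := Nat.choose_succ_right_eq (2 * m + 2) m
    have hcentral := succ_mul_catalan_eq_centralBinom (m + 1)
    rw [Nat.centralBinom, show 2 * (m + 1) = 2 * m + 2 by ring] at hcentral
    rw [show 2 * m + 2 - m = m + 2 by omega] at hchoose
    refine mul_left_cancel₀ (show ((m : ℤ) + 2) ≠ 0 by positivity) ?_
    rw [ballot, show m + 1 + (m + 1) = 2 * m + 2 by ring]
    zify at hchoose hcentral
    linear_combination hchoose - hcentral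

section BallotSum

variable {A : Type*} [CommRing A]

def ballotSum (b : A) (n : ℕ) : A :=
  ∑ p ∈ antidiagonal n, (ballot n p.1 : A) * b ^ p.2

theorem ballotSum_zero (b : A) : ballotSum b 0 = 1 := by
  simp [ballotSum, ballot_zero_right]

theorem ballotSum_succ_mul_one_sub_add (b : A) (n : ℕ) :
    ballotSum b (n + 1) * (1 - b) + b ^ 2 * ballotSum b n = catalan (n + 1) := by
  set S := ∑ p ∈ antidiagonal n, (ballot (n + 1) p.1 : A) * b ^ p.2
  set T := ∑ p ∈ antidiagonal n, (ballot n (p.1 + 1) : A) * b ^ p.2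
  have hS : ballotSum b (n + 1) = catalan (n + 1) + b * S := by
    rw [ballotSum, Nat.sum_antidiagonal_succ', ballot_self, mul_sum]
    simp only [pow_succ', pow_zero, mul_one, Int.cast_natCast, mul_left_comm _ b]
  have hT : b * ballotSum b n = b ^ (n + 1) + T := by
    have h := Nat.sum_antidiagonal_succ' (n := n) (f := fun p => (ballot n p.1 : A) * b ^ p.2)
    rw [Nat.sum_antidiagonal_succ, ballot_succ_self] at h
    simp only [ballot_zero_right, Int.cast_zero, Int.cast_one, zero_mul, zero_add, one_mul,
      pow_succ', mul_left_comm _ b, ← mul_sum] at h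
    rw [ballotSum, pow_succ', h]
  have hM : ballotSum b (n + 1) = b ^ (n + 1) + T + S := by
    simp only [ballotSum, Nat.sum_antidiagonal_succ, ballot_zero_right, ballot_succ_succ,
      Int.cast_one, one_mul, Int.cast_add, add_mul, sum_add_distrib, add_assoc]
    rfl
  linear_combination hS - b * hM + b * hT

theorem ballotSum_eq_sum_range (b : A) (n : ℕ) :
    ballotSum b n = ∑ j ∈ range (n + 1), (ballot n j : A) * b ^ (n - j) :=
  Nat.sum_antidiagonal_eq_sum_range_succ (fun i j => (ballot n i : A) * b ^ j) n

end BallotSum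

namespace PowerSeries

variable {A : Type*} [CommRing A]

theorem eq_map_catalanSeries_of_eq_one_add_X_mul_sq {F : A⟦X⟧} (hF : F = 1 + X * F ^ 2) :
    F = map (Nat.castRingHom A) catalanSeries := by
  set K := map (Nat.castRingHom A) catalanSeries
  have hK : K = 1 + X * K ^ 2 := by
    rw [← map_one (map (Nat.castRingHom A)), ← map_X (Nat.castRingHom A), ← map_pow, ← map_mul,
      ← map_add, add_comm, mul_comm, catalanSeries_sq_mul_X_add_one]
  have hunit : IsUnit (1 - X * (F + K)) := by
    simp [isUnit_iff_constantCoeff]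
  rw [← sub_eq_zero, ← hunit.mul_left_eq_zero]
  linear_combination hF - hK

def ballotSeries (b : A) : A⟦X⟧ :=
  mk (ballotSum b)

theorem ballotSeries_mul_C_add_C_mul_X (b : A) :
    ballotSeries b * (C (1 - b) + C (b ^ 2) * X) =
      map (Nat.castRingHom A) catalanSeries - C b := by
  ext n
  cases n with
  | zero =>
    rw [_root_.map_sub (coeff 0), coeff_map, catalanSeries_coeff]
    simp [ballotSeries, ballotSum_zero]
  | succ n =>
    rw [mul_add, ← mul_assoc, map_add, coeff_mul_C, coeff_succ_mul_X, coeff_mul_C, map_sub,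
      coeff_map, coeff_C, if_neg n.succ_ne_zero, sub_zero, ballotSeries, coeff_mk, coeff_mk,
      catalanSeries_coeff]
    linear_combination ballotSum_succ_mul_one_sub_add b n

theorem ballotSeries_mul_one_sub_C_mul_X_mul [IsDomain A] (b : A) {F : A⟦X⟧}
    (hF : F = 1 + X * F ^ 2) : ballotSeries b * (1 - C b * X * F) = F := by
  have hD : C (1 - b) + C (b ^ 2) * X ≠ 0 := by
    intro h
    have h0 : 1 - b = 0 := by simpa using congrArg (coeff 0) h
    have h1 : b = 0 := by simpa using congrArg (coeff 1) h
    simp [h1] at h0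
  refine mul_right_cancel₀ hD ?_
  calc ballotSeries b * (1 - C b * X * F) * (C (1 - b) + C (b ^ 2) * X)
      = (F - C b) * (1 - C b * X * F) := by
        rw [mul_right_comm, ballotSeries_mul_C_add_C_mul_X, ← eq_map_catalanSeries_of_eq_one_add_X_mul_sq hF]
    _ = F * (C (1 - b) + C (b ^ 2) * X) := by
        rw [map_sub, map_one, map_pow]
        linear_combination C b * hF

end PowerSeries

theorem stmt_17_general (Cat : PowerSeries (Polynomial ℚ))
    (hCat : Cat = 1 + PowerSeries.X * Cat ^ 2) :
    (PowerSeries.mk fun n : ℕ =>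
        ∑ j ∈ Finset.range (n + 1),
          Polynomial.C (((n + j).choose j : ℚ) -
              if j = 0 then 0 else ((n + j).choose (j - 1) : ℚ)) *
            Polynomial.X ^ (n - j)) *
        (1 - PowerSeries.C (R := Polynomial ℚ) Polynomial.X * PowerSeries.X * Cat) = Cat := by
  convert ballotSeries_mul_one_sub_C_mul_X_mul Polynomial.X hCat using 2
  refine congrArg mk (funext fun n => ?_)
  rw [ballotSum_eq_sum_range]
  refine sum_congr rfl fun j _ => ?_
  rw [← cast_ballot, map_intCast]

theorem stmt_17 (Cat : PowerSeries (Polynomial ℚ))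
    (hCat : Cat = 1 + PowerSeries.X * Cat ^ 2)
    (hCat0 : PowerSeries.constantCoeff (R := Polynomial ℚ) Cat = 1) :
    (PowerSeries.mk fun n : ℕ =>
        ∑ j ∈ Finset.range (n + 1),
          Polynomial.C (((n + j).choose j : ℚ) -
              if j = 0 then 0 else ((n + j).choose (j - 1) : ℚ)) *
            Polynomial.X ^ (n - j)) *
        (1 - PowerSeries.C (R := Polynomial ℚ) Polynomial.X * PowerSeries.X * Cat) = Cat :=
  stmt_17_general Cat hCat
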